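/- arXiv:0911.3043 — 5 statements merged into one kernel-verified Lean document; each statement's English description precedes it below -/
import Mathlib

section
/- With ψ(y) = (μ + κy)²/(2σ_M y − σ₋σ₊) on [σ₋, σ₊] and κ ≤ μ·σ_M/(σ_M σ₋ − σ₊σ₋) (note σ_M σ₋ − σ₊σ₋ < 0 when σ₋ < σ₊, so κ is negative and large in absolute value), the minimum of ψ over [σ₋, σ₊] is attained at y₂ = μ/κ + σ₋σ₊/σ_M ∈ [σ₋, σ₊], and the minimum value equals κ(2μσ_M + κσ₋σ₊)/σ_M². -/
/-! Completing the square gives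
`(μ + κ y)² = m (2 σ_M y − σ₋σ₊) + (κ y − μ − κ σ₋σ₊ / σ_M)²` with `m = κ(2μσ_M + κσ₋σ₊)/σ_M²`,
so `ψ ≥ m` wherever the denominator is positive, with equality exactly at `y₂`. The hypothesis
on `κ` is precisely the condition `σ₋ ≤ y₂`; `y₂ ≤ σ₊` holds because `κ < 0`. -/

open Set

theorem isMinOn_div_of_eq_mul_add_sq {f g w : ℝ → ℝ} {s : Set ℝ} {m x₀ : ℝ}
    (hg : ∀ y ∈ s, 0 < g y) (hf : ∀ y, f y = m * g y + w y ^ 2) (hx₀ : x₀ ∈ s)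
    (hw : w x₀ = 0) :
    IsMinOn (fun y => f y / g y) s x₀ ∧ f x₀ / g x₀ = m := by
  have hval : f x₀ / g x₀ = m := by
    rw [hf, hw, div_eq_iff (hg x₀ hx₀).ne']
    ring
  refine ⟨fun y hy => ?_, hval⟩
  change f x₀ / g x₀ ≤ f y / g y
  rw [hval, le_div_iff₀ (hg y hy), hf]
  nlinarith [sq_nonneg (w y)]

theorem sq_add_mul_eq_mul_add_sq (μ κ s a b y : ℝ) (hs : s ≠ 0) :
    (μ + κ * y) ^ 2 = κ * (2 * μ * s + κ * a * b) / s ^ 2 * (2 * s * y - a * b) +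
      (κ * y - μ - κ * (a * b) / s) ^ 2 := by
  field_simp
  ring

section

variable {σm σp μ κ : ℝ} (hσm : 0 < σm) (hσ : σm < σp) (hμ : 0 < μ)
  (hκ : κ ≤ μ * ((σm + σp) / 2) / (((σm + σp) / 2) * σm - σp * σm))
include hσm hσ hμ hκ

theorem neg_of_le_div_sub : κ < 0 :=
  hκ.trans_lt (div_neg_of_pos_of_neg (by nlinarith) (by nlinarith))

theorem mem_Icc_of_le_div_sub : μ / κ + σm * σp / ((σm + σp) / 2) ∈ Icc σm σp := by
  have hs : 0 < (σm + σp) / 2 := by linarith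
  have hD : ((σm + σp) / 2) * σm - σp * σm < 0 := by nlinarith
  have hκneg : κ < 0 := neg_of_le_div_sub hσm hσ hμ hκ
  have hκ' : μ * ((σm + σp) / 2) ≤ κ * (((σm + σp) / 2) * σm - σp * σm) := by
    rw [le_div_iff_of_neg hD] at hκ
    linarith
  have hy₂ : μ / κ + σm * σp / ((σm + σp) / 2) =
      (μ * ((σm + σp) / 2) + κ * (σm * σp)) / (κ * ((σm + σp) / 2)) := by
    rw [div_add_div _ _ hκneg.ne hs.ne']
  have hκs : κ * ((σm + σp) / 2) < 0 := mul_neg_of_neg_of_pos hκneg hs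
  rw [hy₂]
  constructor
  · rw [le_div_iff_of_neg hκs]
    nlinarith
  · rw [div_le_iff_of_neg hκs]
    nlinarith [mul_pos (neg_pos.mpr hκneg) (mul_pos (hσm.trans hσ) (sub_pos.mpr hσ))]

end

/-- If κ ≤ μσ_M/(σ_M σ₋ − σ₊σ₋), then ψ(y) = (μ + κy)²/(2σ_M y − σ₋σ₊) attains its
minimum over [σ₋, σ₊] at y₂ = μ/κ + σ₋σ₊/σ_M ∈ [σ₋, σ₊], with minimum value
κ(2μσ_M + κσ₋σ₊)/σ_M². -/
theorem psi_min_left_regime (σm σp μ κ : ℝ) (hσm : 0 < σm) (hσ : σm < σp) (hμ : 0 < μ)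
    (hκ : κ ≤ μ * ((σm + σp) / 2) / (((σm + σp) / 2) * σm - σp * σm)) :
    (μ / κ + σm * σp / ((σm + σp) / 2) ∈ Set.Icc σm σp) ∧
    IsMinOn (fun y => (μ + κ * y) ^ 2 / (2 * ((σm + σp) / 2) * y - σm * σp))
      (Set.Icc σm σp) (μ / κ + σm * σp / ((σm + σp) / 2)) ∧
    (μ + κ * (μ / κ + σm * σp / ((σm + σp) / 2))) ^ 2 /
        (2 * ((σm + σp) / 2) * (μ / κ + σm * σp / ((σm + σp) / 2)) - σm * σp) =
      κ * (2 * μ * ((σm + σp) / 2) + κ * σm * σp) / ((σm + σp) / 2) ^ 2 := by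
  have hs : (σm + σp) / 2 ≠ 0 := by linarith
  have hκ0 : κ ≠ 0 := (neg_of_le_div_sub hσm hσ hμ hκ).ne
  have hmem := mem_Icc_of_le_div_sub hσm hσ hμ hκ
  have hden : ∀ y ∈ Icc σm σp, 0 < 2 * ((σm + σp) / 2) * y - σm * σp := fun y hy => by
    nlinarith [hy.1]
  obtain ⟨hmin, hval⟩ := isMinOn_div_of_eq_mul_add_sq hden
    (fun y => sq_add_mul_eq_mul_add_sq μ κ _ σm σp y hs) hmem (by field_simp; ring)
  exact ⟨hmem, hmin, hval⟩
end

section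
/- With ψ(y) = (μ + κy)²/(2σ_M y − σ₋σ₊) on [σ₋, σ₊], if μσ_M/(σ_M σ₋ − σ₊σ₋) < κ ≤ −μ/σ₋, then ψ is monotone increasing on [σ₋, σ₊] and its minimum over [σ₋, σ₊] is ψ(σ₋) = (μ + κσ₋)²/σ₋². -/
/-! Write `f y = μ + κ y` and `D y = c y - e`. For `x ≤ y` one has the exact identity
`f y² D x - f x² D y = (y - x) (f x (2 κ D x - c f x) + κ² (y - x) D x)`, so `f² / D` increases
wherever `D > 0` and `f (2 κ D - c f) ≥ 0`, the latter being the sign of the derivative of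
`f² / D`. Under the hypotheses on `κ`, both `f` and `2 κ D - c f` are affine and decreasing on
`[σ₋, σ₊]`, and both are already nonpositive at `σ₋`. -/

theorem sq_div_le_sq_div_of_mul_nonneg {μ κ c e x y : ℝ} (hxy : x ≤ y)
    (hDx : 0 < c * x - e) (hDy : 0 < c * y - e)
    (hx : 0 ≤ (μ + κ * x) * (2 * κ * (c * x - e) - c * (μ + κ * x))) :
    (μ + κ * x) ^ 2 / (c * x - e) ≤ (μ + κ * y) ^ 2 / (c * y - e) := by
  rw [div_le_div_iff₀ hDx hDy, ← sub_nonneg]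
  have key : (μ + κ * y) ^ 2 * (c * x - e) - (μ + κ * x) ^ 2 * (c * y - e) =
      (y - x) * ((μ + κ * x) * (2 * κ * (c * x - e) - c * (μ + κ * x))
        + κ ^ 2 * (y - x) * (c * x - e)) := by ring
  rw [key]
  have hyx : 0 ≤ y - x := sub_nonneg.2 hxy
  positivity

theorem monotoneOn_sq_div_of_mul_nonneg {μ κ c e : ℝ} {s : Set ℝ}
    (hD : ∀ y ∈ s, 0 < c * y - e)
    (hf : ∀ x ∈ s, 0 ≤ (μ + κ * x) * (2 * κ * (c * x - e) - c * (μ + κ * x))) :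
    MonotoneOn (fun y => (μ + κ * y) ^ 2 / (c * y - e)) s :=
  fun _ hx _ hy hxy => sq_div_le_sq_div_of_mul_nonneg hxy (hD _ hx) (hD _ hy) (hf _ hx)

/-- If μσ_M/(σ_M σ₋ − σ₊σ₋) < κ ≤ −μ/σ₋, then ψ(y) = (μ + κy)²/(2σ_M y − σ₋σ₊) is
monotone increasing on [σ₋, σ₊] and its minimum over [σ₋, σ₊] is ψ(σ₋) = (μ + κσ₋)²/σ₋². -/
theorem psi_increasing_regime (σm σp μ κ : ℝ) (hσm : 0 < σm) (hσ : σm < σp) (hμ : 0 < μ)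
    (hκ1 : μ * ((σm + σp) / 2) / (((σm + σp) / 2) * σm - σp * σm) < κ)
    (hκ2 : κ ≤ -μ / σm) :
    MonotoneOn (fun y => (μ + κ * y) ^ 2 / (2 * ((σm + σp) / 2) * y - σm * σp))
      (Set.Icc σm σp) ∧
    IsMinOn (fun y => (μ + κ * y) ^ 2 / (2 * ((σm + σp) / 2) * y - σm * σp))
      (Set.Icc σm σp) σm ∧
    (μ + κ * σm) ^ 2 / (2 * ((σm + σp) / 2) * σm - σm * σp) = (μ + κ * σm) ^ 2 / σm ^ 2 := by
  have hf_left : μ + κ * σm ≤ 0 := by linarith [(le_div_iff₀ hσm).1 hκ2]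
  have hκ : κ < 0 := by nlinarith
  have hg_left : κ * σm * (σm - σp) < μ * (σm + σp) := by
    have hden : ((σm + σp) / 2) * σm - σp * σm < 0 := by nlinarith
    nlinarith [(div_lt_iff_of_neg hden).1 hκ1]
  have hmono : MonotoneOn (fun y => (μ + κ * y) ^ 2 / (2 * ((σm + σp) / 2) * y - σm * σp))
      (Set.Icc σm σp) := by
    refine monotoneOn_sq_div_of_mul_nonneg (fun y hy => by nlinarith [hy.1]) fun x hx => ?_
    have hf : μ + κ * x ≤ 0 := by nlinarith [hx.1]
    have hg : 2 * κ * (2 * ((σm + σp) / 2) * x - σm * σp)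
        - 2 * ((σm + σp) / 2) * (μ + κ * x) ≤ 0 := by
      nlinarith [mul_nonneg (mul_nonneg (neg_nonneg.2 hκ.le) (sub_nonneg.2 hx.1))
        (by linarith : (0 : ℝ) ≤ σm + σp)]
    exact mul_nonneg_of_nonpos_of_nonpos hf hg
  refine ⟨hmono, fun y hy => hmono (Set.left_mem_Icc.2 hσ.le) hy hy.1, ?_⟩
  rw [show 2 * ((σm + σp) / 2) * σm - σm * σp = σm ^ 2 by ring]
end

section
/- With ψ(y) = (μ + κy)²/(2σ_M y − σ₋σ₊) on [σ₋, σ₊], if −μ/σ₊ < κ ≤ μσ_M/(σ_M σ₊ − σ₊σ₋), then ψ is monotone decreasing on [σ₋, σ₊] and its minimum over [σ₋, σ₊] is ψ(σ₊) = (μ + κσ₊)²/σ₊². -/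
/-!
Write `ψ(y) = (μ + κ y)² / (p y - q)`. For `y ≤ z` the cross-multiplied difference factors as
`(μ + κ y)² (p z - q) - (μ + κ z)² (p y - q)
  = (z - y) ((μ + κ z)(p (μ + κ z) - 2 κ (p z - q)) + κ² (z - y)(p z - q))`,
whose first summand is, up to the positive factor `(p z - q)²`, minus `ψ'(z)`. So `ψ` is antitone
wherever the denominator is positive and `ψ' ≤ 0`. With `p = σ₋ + σ₊`, `q = σ₋ σ₊` the factor
`p (μ + κ z) - 2 κ (p z - q)` is affine in `z`: the upper bound on `κ` is its nonnegativity at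
`z = σ₊`, and the lower bound (which also makes `μ + κ z` positive) gives it at `z = σ₋`.
-/

open Set

lemma sq_mul_sub_sq_mul_affine (μ κ p q y z : ℝ) :
    (μ + κ * y) ^ 2 * (p * z - q) - (μ + κ * z) ^ 2 * (p * y - q) =
      (z - y) * ((μ + κ * z) * (p * (μ + κ * z) - 2 * κ * (p * z - q)) +
        κ ^ 2 * (z - y) * (p * z - q)) := by
  ring

lemma antitoneOn_sq_div_affine {S : Set ℝ} (μ κ p q : ℝ)
    (hden : ∀ y ∈ S, 0 < p * y - q)
    (hderiv : ∀ z ∈ S, 0 ≤ (μ + κ * z) * (p * (μ + κ * z) - 2 * κ * (p * z - q))) :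
    AntitoneOn (fun y => (μ + κ * y) ^ 2 / (p * y - q)) S := by
  intro y hy z hz hyz
  rw [div_le_div_iff₀ (hden z hz) (hden y hy), ← sub_nonneg, sq_mul_sub_sq_mul_affine]
  have hzy : 0 ≤ z - y := sub_nonneg.2 hyz
  exact mul_nonneg hzy (add_nonneg (hderiv z hz)
    (mul_nonneg (mul_nonneg (sq_nonneg κ) hzy) (hden z hz).le))

section Regime

variable {σm σp μ κ : ℝ}

lemma add_mul_pos_of_neg_div_lt (hσp : 0 < σp) (hκ1 : -μ / σp < κ) : 0 < μ + κ * σp := by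
  have := (div_lt_iff₀ hσp).1 hκ1
  linarith

lemma mul_mul_sub_le_of_le_div (hσ : σm < σp) (hσp : 0 < σp)
    (hκ2 : κ ≤ μ * ((σm + σp) / 2) / (((σm + σp) / 2) * σp - σp * σm)) :
    κ * σp * (σp - σm) ≤ μ * (σm + σp) := by
  have hden : 0 < ((σm + σp) / 2) * σp - σp * σm := by nlinarith
  have := (le_div_iff₀ hden).1 hκ2
  nlinarith

lemma mean_mul_sub_mul_pos (hσm : 0 < σm) (hσp : 0 ≤ σp) {y : ℝ} (hy : σm ≤ y) :
    0 < 2 * ((σm + σp) / 2) * y - σm * σp := by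
  nlinarith [mul_nonneg hσp (sub_nonneg.2 hy)]

variable {y : ℝ} (hσm : 0 < σm) (hμ : 0 < μ) (hb : 0 < μ + κ * σp) (hy : y ∈ Icc σm σp)
include hσm hμ hb hy

lemma add_mul_pos_of_mem_Icc : 0 < μ + κ * y := by
  rcases le_total 0 κ with hκ | hκ
  · nlinarith [hy.1]
  · nlinarith [hy.2]

lemma deriv_factor_nonneg (hκ2 : κ * σp * (σp - σm) ≤ μ * (σm + σp)) :
    0 ≤ 2 * ((σm + σp) / 2) * (μ + κ * y) - 2 * κ * (2 * ((σm + σp) / 2) * y - σm * σp) := by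
  have hσp : 0 < σp := hσm.trans_le (hy.1.trans hy.2)
  rcases le_total 0 κ with hκ | hκ
  · nlinarith [mul_nonneg hκ (mul_nonneg (add_pos hσm hσp).le (sub_nonneg.2 hy.2))]
  · nlinarith [mul_nonneg (neg_nonneg.2 hκ) (mul_nonneg (add_pos hσm hσp).le (sub_nonneg.2 hy.1)),
      mul_nonneg (neg_nonneg.2 hκ) (sq_nonneg σm), mul_pos hσm hb]

end Regime

/-- If −μ/σ₊ < κ ≤ μσ_M/(σ_M σ₊ − σ₊σ₋), then ψ(y) = (μ + κy)²/(2σ_M y − σ₋σ₊) is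
monotone decreasing on [σ₋, σ₊] and its minimum over [σ₋, σ₊] is ψ(σ₊) = (μ + κσ₊)²/σ₊². -/
theorem psi_decreasing_regime (σm σp μ κ : ℝ) (hσm : 0 < σm) (hσ : σm < σp) (hμ : 0 < μ)
    (hκ1 : -μ / σp < κ)
    (hκ2 : κ ≤ μ * ((σm + σp) / 2) / (((σm + σp) / 2) * σp - σp * σm)) :
    AntitoneOn (fun y => (μ + κ * y) ^ 2 / (2 * ((σm + σp) / 2) * y - σm * σp))
      (Set.Icc σm σp) ∧
    IsMinOn (fun y => (μ + κ * y) ^ 2 / (2 * ((σm + σp) / 2) * y - σm * σp))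
      (Set.Icc σm σp) σp ∧
    (μ + κ * σp) ^ 2 / (2 * ((σm + σp) / 2) * σp - σm * σp) = (μ + κ * σp) ^ 2 / σp ^ 2 := by
  have hσp : 0 < σp := hσm.trans hσ
  have hb : 0 < μ + κ * σp := add_mul_pos_of_neg_div_lt hσp hκ1
  have hκ2' := mul_mul_sub_le_of_le_div hσ hσp hκ2
  have hanti := antitoneOn_sq_div_affine μ κ (2 * ((σm + σp) / 2)) (σm * σp)
    (fun y hy => mean_mul_sub_mul_pos hσm hσp.le hy.1)
    (fun z hz => mul_nonneg (add_mul_pos_of_mem_Icc hσm hμ hb hz).le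
      (deriv_factor_nonneg hσm hμ hb hz hκ2'))
  refine ⟨hanti, fun y hy => hanti hy (right_mem_Icc.2 hσ.le) hy.2, ?_⟩
  congr 1
  ring
end

section
/- With ψ(y) = (μ + κy)²/(2σ_M y − σ₋σ₊) on [σ₋, σ₊] and κ > μσ_M/(σ_M σ₊ − σ₊σ₋), the point y₂ = μ/κ + σ₋σ₊/σ_M lies in [σ₋, σ₊], ψ attains its minimum over [σ₋, σ₊] at y₂, and the minimum value equals κ(2μσ_M + κσ₋σ₊)/σ_M². -/
/-!
Completing the square: for every `y`,
`σ² (μ + κ y)² = κ (2 μ σ + κ c) (2 σ y - c) + (μ σ + κ c - κ σ y)²`,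
so wherever the denominator `2 σ y - c` is positive the quotient is at least
`κ (2 μ σ + κ c) / σ²`, with equality exactly where the square vanishes, at `y₀ = μ / κ + c / σ`.
With `σ = σ_M` and `c = σ₋ σ₊` the denominator is positive on `[σ₋, σ₊]`, and the lower bound on `κ`
is what places `y₀` to the left of `σ₊`.
-/

/-- The paper's `ψ` is `ratioSq μ κ σ_M (σ₋ σ₊)`. -/
noncomputable def ratioSq (μ κ σ c : ℝ) (y : ℝ) : ℝ := (μ + κ * y) ^ 2 / (2 * σ * y - c)

section ratioSq

variable (μ κ σ c : ℝ)

theorem sq_mul_add_sq_eq (y : ℝ) :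
    σ ^ 2 * (μ + κ * y) ^ 2 =
      κ * (2 * μ * σ + κ * c) * (2 * σ * y - c) + (μ * σ + κ * c - κ * σ * y) ^ 2 := by
  ring

variable {μ κ σ c}

theorem le_ratioSq (hσ : σ ≠ 0) {y : ℝ} (hy : c < 2 * σ * y) :
    κ * (2 * μ * σ + κ * c) / σ ^ 2 ≤ ratioSq μ κ σ c y := by
  have hden : 0 < 2 * σ * y - c := sub_pos.mpr hy
  rw [ratioSq, div_le_div_iff₀ (by positivity) hden, mul_comm (_ ^ 2), sq_mul_add_sq_eq]
  nlinarith [sq_nonneg (μ * σ + κ * c - κ * σ * y)]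

theorem ratioSq_vertex (hκ : κ ≠ 0) (hσ : σ ≠ 0) (hy : c < 2 * σ * (μ / κ + c / σ)) :
    ratioSq μ κ σ c (μ / κ + c / σ) = κ * (2 * μ * σ + κ * c) / σ ^ 2 := by
  have hden : 2 * σ * (μ / κ + c / σ) - c ≠ 0 := (sub_pos.mpr hy).ne'
  have hsq : μ * σ + κ * c - κ * σ * (μ / κ + c / σ) = 0 := by
    field_simp
    ring
  rw [ratioSq, div_eq_div_iff hden (pow_ne_zero 2 hσ), mul_comm (_ ^ 2), sq_mul_add_sq_eq, hsq]
  ring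

theorem isMinOn_ratioSq_vertex (hκ : κ ≠ 0) (hσ : σ ≠ 0) {s : Set ℝ}
    (hs : ∀ y ∈ s, c < 2 * σ * y) (hy₀ : μ / κ + c / σ ∈ s) :
    IsMinOn (ratioSq μ κ σ c) s (μ / κ + c / σ) :=
  isMinOn_iff.mpr fun y hy => ratioSq_vertex hκ hσ (hs _ hy₀) ▸ le_ratioSq hσ (hs y hy)

end ratioSq

section interval

variable {σm σp : ℝ}

theorem midpoint_mul_sub_mul_pos (hσm : 0 < σm) (hσ : σm < σp) :
    0 < ((σm + σp) / 2) * σp - σp * σm := by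
  nlinarith

theorem mul_lt_two_mul_midpoint_mul (hσm : 0 < σm) (hσ : σm < σp) {y : ℝ}
    (hy : y ∈ Set.Icc σm σp) : σm * σp < 2 * ((σm + σp) / 2) * y := by
  nlinarith [hy.1]

theorem vertex_mem_Icc (hσm : 0 < σm) (hσ : σm < σp) {μ κ : ℝ} (hμ : 0 < μ) (hκ0 : 0 < κ)
    (hκ : μ * ((σm + σp) / 2) / (((σm + σp) / 2) * σp - σp * σm) < κ) :
    μ / κ + σm * σp / ((σm + σp) / 2) ∈ Set.Icc σm σp := by
  have hσp : 0 < σp := hσm.trans hσ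
  have hσM : 0 < (σm + σp) / 2 := by positivity
  have hκ' : μ * ((σm + σp) / 2) < κ * (((σm + σp) / 2) * σp - σp * σm) :=
    (div_lt_iff₀ (midpoint_mul_sub_mul_pos hσm hσ)).mp hκ
  have hleft : σm ≤ σm * σp / ((σm + σp) / 2) := by
    rw [le_div_iff₀ hσM]
    nlinarith
  constructor
  · linarith [div_pos hμ hκ0]
  · rw [div_add_div _ _ hκ0.ne' hσM.ne', div_le_iff₀ (by positivity)]
    nlinarith

end interval

/-- If κ > μσ_M/(σ_M σ₊ − σ₊σ₋), then y₂ = μ/κ + σ₋σ₊/σ_M lies in [σ₋, σ₊], and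
ψ(y) = (μ + κy)²/(2σ_M y − σ₋σ₊) attains its minimum over [σ₋, σ₊] at y₂, with minimum
value κ(2μσ_M + κσ₋σ₊)/σ_M². -/
theorem psi_min_right_regime (σm σp μ κ : ℝ) (hσm : 0 < σm) (hσ : σm < σp) (hμ : 0 < μ)
    (hκ : μ * ((σm + σp) / 2) / (((σm + σp) / 2) * σp - σp * σm) < κ) :
    (μ / κ + σm * σp / ((σm + σp) / 2) ∈ Set.Icc σm σp) ∧
    IsMinOn (fun y => (μ + κ * y) ^ 2 / (2 * ((σm + σp) / 2) * y - σm * σp))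
      (Set.Icc σm σp) (μ / κ + σm * σp / ((σm + σp) / 2)) ∧
    (μ + κ * (μ / κ + σm * σp / ((σm + σp) / 2))) ^ 2 /
        (2 * ((σm + σp) / 2) * (μ / κ + σm * σp / ((σm + σp) / 2)) - σm * σp) =
      κ * (2 * μ * ((σm + σp) / 2) + κ * σm * σp) / ((σm + σp) / 2) ^ 2 := by
  have hσM : 0 < (σm + σp) / 2 := by linarith
  have hκ0 : 0 < κ := (div_pos (mul_pos hμ hσM) (midpoint_mul_sub_mul_pos hσm hσ)).trans hκ
  have hmem := vertex_mem_Icc hσm hσ hμ hκ0 hκ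
  have hden := fun y (hy : y ∈ Set.Icc σm σp) => mul_lt_two_mul_midpoint_mul hσm hσ hy
  refine ⟨hmem, isMinOn_ratioSq_vertex hκ0.ne' hσM.ne' hden hmem, ?_⟩
  rw [mul_assoc κ σm σp]
  exact ratioSq_vertex hκ0.ne' hσM.ne' (hden _ hmem)
end

section
/- Let (ξ,η) be a pair of random variables with values in K = [μ₋,μ₊]×[σ₋,σ₊] (0 ≤ μ₋ ≤ μ₊, 0 < σ₋ ≤ σ₊). Then the infimum of (Eξ + κEη)²/(Eη²) over all such pairs is attained by a pair (ξ*, η*) in which ξ* is a constant (equal to μ₋ or μ₊ or a value in between) and η* is a Bernoulli random variable with values in {σ₋, σ₊}; in particular the infimum equals min over (m, y) with m ∈ [μ₋,μ₊], y ∈ [σ₋,σ₊] of (m + κy)²/(2σ_M y − σ₋σ₊), where σ_M = (σ₋+σ₊)/2. -/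
/-!
Write `D(y) = (σ₋ + σ₊) y − σ₋σ₊`. On `[σ₋, σ₊]` we have `t² ≤ D(t)`, with equality exactly at the
endpoints, so for every admissible pair `Eη² ≤ D(Eη)`, with equality when `η` only takes the values
`σ₋, σ₊`. Hence the ratio of `(ξ, η)` is at least the reduced objective at `(Eξ, Eη) ∈ K`, and a
Bernoulli `η*` on `{σ₋, σ₊}` with prescribed mean, together with a constant `ξ*`, attains it.
-/

open MeasureTheory ProbabilityTheory Set unitInterval

lemma sq_le_add_mul_sub_mul_of_mem_Icc {a b t : ℝ} (ht : t ∈ Icc a b) :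
    t ^ 2 ≤ (a + b) * t - a * b := by
  nlinarith [mul_nonneg (sub_nonneg.2 ht.1) (sub_nonneg.2 ht.2)]

lemma integral_sq_le_of_ae_mem_Icc {Ω : Type*} [MeasurableSpace Ω] {P : Measure Ω}
    [IsProbabilityMeasure P] {f : Ω → ℝ} {a b : ℝ} (hf : Integrable f P)
    (hf2 : Integrable (fun ω => f ω ^ 2) P) (h : ∀ᵐ ω ∂P, f ω ∈ Icc a b) :
    ∫ ω, f ω ^ 2 ∂P ≤ (a + b) * ∫ ω, f ω ∂P - a * b := calc
  ∫ ω, f ω ^ 2 ∂P ≤ ∫ ω, ((a + b) * f ω - a * b) ∂P :=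
    integral_mono_ae hf2 ((hf.const_mul _).sub (integrable_const _))
      (h.mono fun _ hω => sq_le_add_mul_sub_mul_of_mem_Icc hω)
  _ = (a + b) * ∫ ω, f ω ∂P - a * b := by
    rw [integral_sub (hf.const_mul _) (integrable_const _), integral_const_mul]
    simp

lemma integral_sq_ite_bernoulliMeasure (a b : ℝ) (p : I) :
    ∫ ω, (if ω then b else a) ^ 2 ∂Ber(true, false, p) =
      (a + b) * ∫ ω, (if ω then b else a) ∂Ber(true, false, p) - a * b := by
  simp only [integral_bernoulliMeasure, if_true, Bool.false_eq_true, if_false, smul_eq_mul]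
  ring

lemma exists_integral_ite_bernoulliMeasure_eq {a b y : ℝ} (hy : y ∈ Icc a b) :
    ∃ p : I, ∫ ω, (if ω then b else a) ∂Ber(true, false, p) = y := by
  -- for `a = b` the junk value `(y - a) / 0 = 0` is still a valid choice, since then `y = a`
  refine ⟨⟨(y - a) / (b - a), div_nonneg (by linarith [hy.1]) (by linarith [hy.1, hy.2]),
    div_le_one_of_le₀ (by linarith [hy.2]) (by linarith [hy.1, hy.2])⟩, ?_⟩
  have hp : (y - a) / (b - a) * (b - a) = y - a :=
    div_mul_cancel_of_imp fun h => by linarith [hy.1, hy.2]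
  simp only [integral_bernoulliMeasure, if_true, Bool.false_eq_true, if_false, smul_eq_mul]
  linear_combination hp

theorem infimum_ratio_reduction_general (μm μp σm σp κ : ℝ)
    (hσ0 : 0 < σm) :
    letI S : Set ℝ := (fun q : ℝ × ℝ =>
      (q.1 + κ * q.2) ^ 2 / (2 * ((σm + σp) / 2) * q.2 - σm * σp)) ''
        (Set.Icc μm μp ×ˢ Set.Icc σm σp)
    -- every admissible pair's ratio dominates the minimum of the reduced problem
    (∀ (Ω : Type) (_ : MeasurableSpace Ω) (P : Measure Ω), IsProbabilityMeasure P →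
      ∀ ξ η : Ω → ℝ, Integrable ξ P → Integrable η P →
        Integrable (fun ω => (η ω) ^ 2) P →
        (∀ᵐ ω ∂P, ξ ω ∈ Set.Icc μm μp) → (∀ᵐ ω ∂P, η ω ∈ Set.Icc σm σp) →
        sInf S ≤ ((∫ ω, ξ ω ∂P) + κ * ∫ ω, η ω ∂P) ^ 2 / ∫ ω, (η ω) ^ 2 ∂P) ∧
    -- every value of the reduced problem is attained by a constant ξ* and a Bernoulli η*
    (∀ m ∈ Set.Icc μm μp, ∀ y ∈ Set.Icc σm σp,
      ∃ (P : Measure Bool), IsProbabilityMeasure P ∧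
        letI ξstar : Bool → ℝ := fun _ => m
        letI ηstar : Bool → ℝ := fun ω => if ω then σp else σm
        (∫ ω, ηstar ω ∂P = y) ∧
        ((∫ ω, ξstar ω ∂P) + κ * ∫ ω, ηstar ω ∂P) ^ 2 / (∫ ω, (ηstar ω) ^ 2 ∂P) =
          (m + κ * y) ^ 2 / (2 * ((σm + σp) / 2) * y - σm * σp)) := by
  refine ⟨fun Ω _ P _ ξ η hξ hη hη2 hξK hηK => ?_, fun m _ y hy => ?_⟩
  · have hm := (convex_Icc μm μp).integral_mem isClosed_Icc hξK hξ
    have hy := (convex_Icc σm σp).integral_mem isClosed_Icc hηK hη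
    have hsecond_pos : 0 < ∫ ω, η ω ^ 2 ∂P :=
      (pow_pos hσ0 2).trans_le <| (convex_Ici _).integral_mem isClosed_Ici
        (hηK.mono fun _ hω => pow_le_pow_left₀ hσ0.le hω.1 2) hη2
    have hsecond_le := integral_sq_le_of_ae_mem_Icc hη hη2 hηK
    refine (csInf_le ?_ (mem_image_of_mem _ (mk_mem_prod hm hy))).trans ?_
    · refine ⟨0, ?_⟩
      rintro _ ⟨q, ⟨-, hq⟩, rfl⟩
      exact div_nonneg (sq_nonneg _)
        (by linarith [sq_nonneg q.2, sq_le_add_mul_sub_mul_of_mem_Icc hq])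
    · exact div_le_div_of_nonneg_left (sq_nonneg _) hsecond_pos (by dsimp only; linarith)
  · obtain ⟨p, hp⟩ := exists_integral_ite_bernoulliMeasure_eq hy
    refine ⟨Ber(true, false, p), inferInstance, hp, ?_⟩
    simp only [integral_sq_ite_bernoulliMeasure, hp, integral_const, probReal_univ, one_smul]
    ring

/-- The infimum of (Eξ + κEη)²/Eη² over pairs (ξ,η) of random variables with values in
K = [μ₋,μ₊]×[σ₋,σ₊] equals the minimum over (m,y) ∈ K of (m + κy)²/(2σ_M y − σ₋σ₊),
attained by a constant ξ* and a Bernoulli η* with values in {σ₋,σ₊}. -/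
theorem infimum_ratio_reduction (μm μp σm σp κ : ℝ)
    (hμ0 : 0 ≤ μm) (hμ : μm ≤ μp) (hσ0 : 0 < σm) (hσ : σm ≤ σp) :
    letI S : Set ℝ := (fun q : ℝ × ℝ =>
      (q.1 + κ * q.2) ^ 2 / (2 * ((σm + σp) / 2) * q.2 - σm * σp)) ''
        (Set.Icc μm μp ×ˢ Set.Icc σm σp)
    -- every admissible pair's ratio dominates the minimum of the reduced problem
    (∀ (Ω : Type) (_ : MeasurableSpace Ω) (P : Measure Ω), IsProbabilityMeasure P →
      ∀ ξ η : Ω → ℝ, Integrable ξ P → Integrable η P →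
        Integrable (fun ω => (η ω) ^ 2) P →
        (∀ᵐ ω ∂P, ξ ω ∈ Set.Icc μm μp) → (∀ᵐ ω ∂P, η ω ∈ Set.Icc σm σp) →
        sInf S ≤ ((∫ ω, ξ ω ∂P) + κ * ∫ ω, η ω ∂P) ^ 2 / ∫ ω, (η ω) ^ 2 ∂P) ∧
    -- every value of the reduced problem is attained by a constant ξ* and a Bernoulli η*
    (∀ m ∈ Set.Icc μm μp, ∀ y ∈ Set.Icc σm σp,
      ∃ (P : Measure Bool), IsProbabilityMeasure P ∧
        letI ξstar : Bool → ℝ := fun _ => m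
        letI ηstar : Bool → ℝ := fun ω => if ω then σp else σm
        (∫ ω, ηstar ω ∂P = y) ∧
        ((∫ ω, ξstar ω ∂P) + κ * ∫ ω, ηstar ω ∂P) ^ 2 / (∫ ω, (ηstar ω) ^ 2 ∂P) =
          (m + κ * y) ^ 2 / (2 * ((σm + σp) / 2) * y - σm * σp)) :=
  infimum_ratio_reduction_general μm μp σm σp κ hσ0
end
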